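/- arXiv:2012.04364 — 5 statements merged into one kernel-verified Lean document; each statement's English description precedes it below -/
import Mathlib

section
/- Suppose the asset payoffs Y = (Y₀, Y₁, …, Yₙ) are square-integrable with Y₀ = e^r a.s. for a constant r ≥ 0, and let S⊥ be a square-integrable liability that is independent of the random vector (Y₁, …, Yₙ). Then the strategy θ = (e^{−r}·E[S⊥], 0, …, 0), which invests only in the risk-free asset, minimizes β ↦ E[(S⊥ − β·Y)²] over β ∈ ℝ^{n+1}. -/
/-!
Since `Y₀` is a.s. the constant `eʳ`, the payoff of `θ` is a.s. `E[S⊥]`, while the payoff of any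
`β` is a.s. `Z = β₀ eʳ + ∑ βᵢ Yᵢ`, a measurable function of `(Y₁, …, Yₙ)` and hence independent
of `S⊥`. Independence kills the covariance, so
`E[(S⊥ - Z)²] ≥ Var(S⊥ - Z) = Var S⊥ + Var Z ≥ Var S⊥ = E[(S⊥ - E[S⊥])²]`.
-/

open MeasureTheory ProbabilityTheory

section

variable {Ω : Type*} {mΩ : MeasurableSpace Ω} {μ : Measure Ω}

lemma ProbabilityTheory.IndepFun.variance_le_integral_sub_sq [IsProbabilityMeasure μ]
    {X Z : Ω → ℝ} (h : X ⟂ᵢ[μ] Z) (hX : MemLp X 2 μ) (hZ : MemLp Z 2 μ) :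
    Var[X; μ] ≤ ∫ ω, (X ω - Z ω) ^ 2 ∂μ :=
  calc Var[X; μ] ≤ Var[X; μ] + Var[Z; μ] := le_add_of_nonneg_right (variance_nonneg _ _)
    _ = Var[X - Z; μ] := by rw [variance_sub hX hZ, h.covariance_eq_zero hX hZ]; ring
    _ ≤ ∫ ω, (X ω - Z ω) ^ 2 ∂μ := variance_le_expectation_sq (hX.1.sub hZ.1)

lemma sum_mul_ae_eq_of_head_ae_eq_const {n : ℕ} {Y : Fin (n + 1) → Ω → ℝ} {c : ℝ}
    (hY0 : ∀ᵐ ω ∂μ, Y 0 ω = c) (β : Fin (n + 1) → ℝ) :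
    (fun ω ↦ ∑ i, β i * Y i ω) =ᵐ[μ] fun ω ↦ β 0 * c + ∑ i : Fin n, β i.succ * Y i.succ ω := by
  filter_upwards [hY0] with ω h0
  rw [Fin.sum_univ_succ, h0]

end

theorem riskfree_quadratic_hedge_of_indep_general
    {Ω : Type*} [MeasureSpace Ω] [IsProbabilityMeasure (volume : Measure Ω)]
    (n : ℕ) (Y : Fin (n + 1) → Ω → ℝ)
    (hY : ∀ i, MemLp (Y i) 2 volume)
    (r : ℝ) (hY0 : ∀ᵐ ω, Y 0 ω = Real.exp r)
    (Sp : Ω → ℝ) (hSp : MemLp Sp 2 volume)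
    (hIndep : ProbabilityTheory.IndepFun Sp (fun ω (i : Fin n) => Y i.succ ω) volume)
    (θ : Fin (n + 1) → ℝ)
    (hθdef : θ = fun i => if i = 0 then Real.exp (-r) * ∫ ω, Sp ω else 0) :
    ∀ β : Fin (n + 1) → ℝ,
      (∫ ω, (Sp ω - ∑ i, θ i * Y i ω) ^ 2) ≤ ∫ ω, (Sp ω - ∑ i, β i * Y i ω) ^ 2 := by
  intro β
  have hθY : (fun ω ↦ ∑ i, θ i * Y i ω) =ᵐ[volume] fun _ ↦ ∫ ω, Sp ω := by
    refine (sum_mul_ae_eq_of_head_ae_eq_const hY0 θ).trans (.of_forall fun ω ↦ ?_)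
    simp [hθdef, Fin.succ_ne_zero, mul_right_comm, ← Real.exp_add]
  set Z : Ω → ℝ := fun ω ↦ β 0 * Real.exp r + ∑ i : Fin n, β i.succ * Y i.succ ω
  have hZ : MemLp Z 2 volume := (memLp_const (β 0 * Real.exp r)).add <|
    memLp_finsetSum (f := fun (i : Fin n) ω ↦ β i.succ * Y i.succ ω) _ fun i _ ↦ (hY i.succ).const_mul _
  have hSpZ : Sp ⟂ᵢ[volume] Z := hIndep.comp measurable_id
    (ψ := fun v : Fin n → ℝ ↦ β 0 * Real.exp r + ∑ i, β i.succ * v i) (by fun_prop)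
  calc (∫ ω, (Sp ω - ∑ i, θ i * Y i ω) ^ 2) = Var[Sp; volume] := by
        rw [variance_eq_integral hSp.1.aemeasurable]
        exact integral_congr_ae (hθY.mono fun ω h ↦ by simp only [h])
    _ ≤ ∫ ω, (Sp ω - Z ω) ^ 2 := hSpZ.variance_le_integral_sub_sq hSp hZ
    _ = ∫ ω, (Sp ω - ∑ i, β i * Y i ω) ^ 2 := integral_congr_ae <|
        (sum_mul_ae_eq_of_head_ae_eq_const hY0 β).mono fun ω h ↦ by simp only [h, Z]

/-- If `Y₀ = e^r` a.s. (with `r ≥ 0`) and the square-integrable liability `S⊥` is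
independent of the random vector `(Y₁, …, Yₙ)`, then the strategy investing only
`e^{−r}·E[S⊥]` in the risk-free asset minimizes `β ↦ E[(S⊥ − β·Y)²]`. -/
theorem riskfree_quadratic_hedge_of_indep
    {Ω : Type*} [MeasureSpace Ω] [IsProbabilityMeasure (volume : Measure Ω)]
    (n : ℕ) (Y : Fin (n + 1) → Ω → ℝ)
    (hY : ∀ i, MemLp (Y i) 2 volume)
    (r : ℝ) (hr : 0 ≤ r) (hY0 : ∀ᵐ ω, Y 0 ω = Real.exp r)
    (Sp : Ω → ℝ) (hSp : MemLp Sp 2 volume)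
    (hIndep : ProbabilityTheory.IndepFun Sp (fun ω (i : Fin n) => Y i.succ ω) volume)
    (θ : Fin (n + 1) → ℝ)
    (hθdef : θ = fun i => if i = 0 then Real.exp (-r) * ∫ ω, Sp ω else 0) :
    ∀ β : Fin (n + 1) → ℝ,
      (∫ ω, (Sp ω - ∑ i, θ i * Y i ω) ^ 2) ≤ ∫ ω, (Sp ω - ∑ i, β i * Y i ω) ^ 2 :=
  riskfree_quadratic_hedge_of_indep_general n Y hY r hY0 Sp hSp hIndep θ hθdef
end

section
/- Let X be an integrable random variable and α ∈ (0,1). Then the lower α-quantile VaR_α(X) = inf{x ∈ ℝ : P(X ≤ x) ≥ α} is a minimizer of the map c ↦ E[ℓ_α(X − c)] over c ∈ ℝ, where ℓ_α is the normalised Koenker–Bassett loss. -/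
open MeasureTheory

/-- Value-at-Risk at level `α`: the lower `α`-quantile
`VaR_α(X) = inf {x ∈ ℝ : P(X ≤ x) ≥ α}`. -/
noncomputable def VaR {Ω : Type*} [MeasureSpace Ω] (X : Ω → ℝ) (α : ℝ) : ℝ :=
  sInf {x : ℝ | α ≤ (volume {ω | X ω ≤ x}).toReal}

/-- The normalised Koenker–Bassett loss at level `α`:
`ℓ_α(x) = (α/(1−α))·max(x,0) + max(−x,0)`. -/
noncomputable def KBLoss (α x : ℝ) : ℝ :=
  α / (1 - α) * max x 0 + max (-x) 0

/-!
Since `ℓ_α(x) = (α x + max(-x, 0)) / (1 - α)`, the expected loss at `c` is, up to the factor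
`1 / (1 - α)` and the constant `α E[X]`, the convex function `φ(c) = E[max(c - X, 0)] - α c`.
Both `1{x ≤ q}` and `1{x < q}` are subgradients of `b ↦ max(b - x, 0)` at `q`, so
`φ(c) - φ(q)` is at least `(c - q) (P(X ≤ q) - α)` and at least `(c - q) (P(X < q) - α)`;
one of them is nonnegative whenever `P(X < q) ≤ α ≤ P(X ≤ q)`. Passing to the law of `X` on
`ℝ`, the lower quantile `q = VaR_α(X)` satisfies `α ≤ P(X ≤ q)` by right-continuity of the
distribution function, and `P(X < q) ≤ α` because the distribution function stays below `α`
to the left of `q`.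
-/

open Set Filter Topology ProbabilityTheory

lemma KBLoss_eq {α : ℝ} (hα : α ≠ 1) (x : ℝ) :
    KBLoss α x = (α * x + max (-x) 0) / (1 - α) := by
  have : 1 - α ≠ 0 := sub_ne_zero.2 hα.symm
  rcases le_total x 0 with hx | hx
  · simp only [KBLoss, max_eq_right hx, max_eq_left (neg_nonneg.2 hx)]
    field_simp
    ring
  · simp only [KBLoss, max_eq_left hx, max_eq_right (neg_nonpos.2 hx)]
    field_simp
    ring

lemma continuous_KBLoss (α : ℝ) : Continuous (KBLoss α) := by
  unfold KBLoss
  fun_prop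

lemma max_sub_add_mul_indicator_Iic_le (q c x : ℝ) :
    max (q - x) 0 + (c - q) * (Iic q).indicator 1 x ≤ max (c - x) 0 := by
  by_cases hx : x ≤ q
  · simp only [indicator_of_mem (mem_Iic.2 hx), Pi.one_apply, max_eq_left (sub_nonneg.2 hx)]
    linarith [le_max_left (c - x) 0]
  · simp only [indicator_of_notMem (notMem_Iic.2 (not_le.1 hx)), mul_zero, add_zero,
      max_eq_right (sub_nonpos.2 (not_le.1 hx).le)]
    exact le_max_right _ _

lemma max_sub_add_mul_indicator_Iio_le (q c x : ℝ) :
    max (q - x) 0 + (c - q) * (Iio q).indicator 1 x ≤ max (c - x) 0 := by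
  by_cases hx : x < q
  · simp only [indicator_of_mem (mem_Iio.2 hx), Pi.one_apply, max_eq_left (sub_nonneg.2 hx.le)]
    linarith [le_max_left (c - x) 0]
  · simp only [indicator_of_notMem (notMem_Iio.2 (not_lt.1 hx)), mul_zero, add_zero,
      max_eq_right (sub_nonpos.2 (not_lt.1 hx))]
    exact le_max_right _ _

section QuantileMinimizesLoss

variable {ν : Measure ℝ} [IsProbabilityMeasure ν]

lemma integral_max_sub_add_le {A : Set ℝ} (hA : MeasurableSet A) (hν : Integrable id ν)
    {q c : ℝ} (h : ∀ x, max (q - x) 0 + (c - q) * A.indicator 1 x ≤ max (c - x) 0) :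
    ∫ x, max (q - x) 0 ∂ν + (c - q) * ν.real A ≤ ∫ x, max (c - x) 0 ∂ν := by
  have hmax : ∀ b, Integrable (fun x => max (b - x) 0) ν :=
    fun b => ((integrable_const b).sub hν).sup (integrable_const 0)
  have hind : Integrable (fun x => (c - q) * A.indicator 1 x) ν :=
    ((integrable_const (1 : ℝ)).indicator hA).const_mul _
  calc ∫ x, max (q - x) 0 ∂ν + (c - q) * ν.real A
      = ∫ x, (max (q - x) 0 + (c - q) * A.indicator 1 x) ∂ν := by
        rw [integral_add (hmax q) hind, integral_const_mul, integral_indicator_one hA]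
    _ ≤ ∫ x, max (c - x) 0 ∂ν := integral_mono ((hmax q).add hind) (hmax c) h

lemma integral_KBLoss_sub {α : ℝ} (hα : α ≠ 1) (hν : Integrable id ν) (b : ℝ) :
    ∫ x, KBLoss α (x - b) ∂ν =
      (α * (∫ x, x ∂ν - b) + ∫ x, max (b - x) 0 ∂ν) / (1 - α) := by
  have hlin : Integrable (fun x => α * (x - b)) ν := (hν.sub (integrable_const b)).const_mul α
  have hmax : Integrable (fun x => max (b - x) 0) ν :=
    ((integrable_const b).sub hν).sup (integrable_const 0)
  simp only [KBLoss_eq hα, neg_sub]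
  rw [integral_div, integral_add hlin hmax, integral_const_mul,
    integral_sub (f := fun x => x) hν (integrable_const b), integral_const,
    probReal_univ, one_smul]

theorem integral_KBLoss_sub_le_of_quantile {α q : ℝ} (hα : α < 1) (hν : Integrable id ν)
    (hlt : ν.real (Iio q) ≤ α) (hle : α ≤ ν.real (Iic q)) (c : ℝ) :
    ∫ x, KBLoss α (x - q) ∂ν ≤ ∫ x, KBLoss α (x - c) ∂ν := by
  rw [integral_KBLoss_sub hα.ne hν, integral_KBLoss_sub hα.ne hν]
  refine div_le_div_of_nonneg_right ?_ (sub_nonneg.2 hα.le)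
  have key : α * (c - q) + ∫ x, max (q - x) 0 ∂ν ≤ ∫ x, max (c - x) 0 ∂ν := by
    rcases le_total q c with hqc | hcq
    · have h :=
        integral_max_sub_add_le measurableSet_Iic hν (max_sub_add_mul_indicator_Iic_le q c)
      linarith [mul_le_mul_of_nonneg_left hle (sub_nonneg.2 hqc)]
    · have h :=
        integral_max_sub_add_le measurableSet_Iio hν (max_sub_add_mul_indicator_Iio_le q c)
      linarith [mul_le_mul_of_nonneg_left hlt (sub_nonneg.2 hcq)]
  linarith

end QuantileMinimizesLoss

lemma StieltjesFunction.le_apply_sInf {f : StieltjesFunction ℝ} {α : ℝ}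
    (hne : {x | α ≤ f x}.Nonempty) :
    α ≤ f (sInf {x | α ≤ f x}) := by
  set q := sInf {x | α ≤ f x}
  have hf : Tendsto f (𝓝[>] q) (𝓝 (f q)) := (f.right_continuous q).mono Ioi_subset_Ici_self
  refine ge_of_tendsto hf (eventually_nhdsWithin_of_forall fun x hx => ?_)
  obtain ⟨s, hs, hsx⟩ := exists_lt_of_csInf_lt hne hx
  exact hs.trans (f.mono hsx.le)

lemma Monotone.leftLim_sInf_le {f : ℝ → ℝ} (hf : Monotone f) {α : ℝ}
    (hbdd : BddBelow {x | α ≤ f x}) : Function.leftLim f (sInf {x | α ≤ f x}) ≤ α :=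
  _root_.le_of_tendsto (hf.tendsto_leftLim _) (eventually_nhdsWithin_of_forall fun _ hx =>
    (not_le.1 (notMem_of_lt_csInf (s := {x | α ≤ f x}) hx hbdd)).le)

section CDF

variable (ν : Measure ℝ) {α : ℝ}

lemma nonempty_setOf_le_cdf (hα : α < 1) : {x | α ≤ cdf ν x}.Nonempty :=
  ((tendsto_cdf_atTop ν).eventually (eventually_ge_nhds hα)).exists

lemma bddBelow_setOf_le_cdf (hα : 0 < α) : BddBelow {x | α ≤ cdf ν x} := by
  obtain ⟨m, hm⟩ :=
    eventually_atBot.1 ((tendsto_cdf_atBot ν).eventually (eventually_lt_nhds hα))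
  exact ⟨m, fun s hs => le_of_not_ge fun hsm => (hm s hsm).not_ge hs⟩

lemma measureReal_Iio_eq_leftLim_cdf [IsProbabilityMeasure ν] (x : ℝ) :
    ν.real (Iio x) = Function.leftLim (cdf ν) x := by
  have h := (cdf ν).measure_Iio (tendsto_cdf_atBot ν) x
  rw [measure_cdf, sub_zero] at h
  rw [measureReal_def, h, ENNReal.toReal_ofReal]
  exact (cdf_nonneg ν (x - 1)).trans ((cdf ν).mono.le_leftLim (sub_one_lt x))

lemma measureReal_Iio_sInf_setOf_le_cdf_le [IsProbabilityMeasure ν] (hα : 0 < α) :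
    ν.real (Iio (sInf {x | α ≤ cdf ν x})) ≤ α := by
  rw [measureReal_Iio_eq_leftLim_cdf]
  exact (monotone_cdf ν).leftLim_sInf_le (bddBelow_setOf_le_cdf ν hα)

lemma le_measureReal_Iic_sInf_setOf_le_cdf [IsProbabilityMeasure ν] (hα : α < 1) :
    α ≤ ν.real (Iic (sInf {x | α ≤ cdf ν x})) := by
  rw [← cdf_eq_real]
  exact (cdf ν).le_apply_sInf (nonempty_setOf_le_cdf ν hα)

end CDF

lemma VaR_eq_sInf_setOf_le_cdf_map {Ω : Type*} [MeasureSpace Ω]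
    [IsProbabilityMeasure (volume : Measure Ω)] {X : Ω → ℝ} (hX : AEMeasurable X) (α : ℝ) :
    VaR X α = sInf {x | α ≤ cdf (volume.map X) x} := by
  have := Measure.isProbabilityMeasure_map hX
  simp only [VaR, cdf_eq_real, measureReal_def,
    Measure.map_apply_of_aemeasurable hX measurableSet_Iic]
  rfl

/-- For an integrable random variable `X` and `α ∈ (0,1)`, the lower `α`-quantile
`VaR_α(X)` minimizes `c ↦ E[ℓ_α(X − c)]` over `c ∈ ℝ`. -/
theorem VaR_minimizes_KB_error
    {Ω : Type*} [MeasureSpace Ω] [IsProbabilityMeasure (volume : Measure Ω)]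
    (X : Ω → ℝ) (hX : Integrable X volume)
    (α : ℝ) (hα : α ∈ Set.Ioo (0 : ℝ) 1) :
    ∀ c : ℝ,
      (∫ ω, KBLoss α (X ω - VaR X α)) ≤ ∫ ω, KBLoss α (X ω - c) := by
  intro c
  have hXm := hX.aemeasurable
  set ν := (volume : Measure Ω).map X
  have : IsProbabilityMeasure ν := Measure.isProbabilityMeasure_map hXm
  have hlaw (b : ℝ) : ∫ ω, KBLoss α (X ω - b) = ∫ x, KBLoss α (x - b) ∂ν :=
    (integral_map hXm
      ((continuous_KBLoss α).comp (continuous_sub_right b)).aestronglyMeasurable).symm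
  have hν : Integrable id ν := (integrable_map_measure aestronglyMeasurable_id hXm).2 hX
  rw [hlaw, hlaw, VaR_eq_sInf_setOf_le_cdf_map hXm]
  exact integral_KBLoss_sub_le_of_quantile hα.2 hν (measureReal_Iio_sInf_setOf_le_cdf_le ν hα.1)
    (le_measureReal_Iic_sInf_setOf_le_cdf ν hα.2) c
end

section
/- Suppose the asset payoffs Y = (Y₀, Y₁, …, Yₙ) are integrable with Y₀ equal a.s. to a strictly positive constant, let S be an integrable liability and α ∈ (0,1). If ξ ∈ ℝ^{n+1} minimizes β ↦ E[ℓ_α(S − β·Y)] over β ∈ ℝ^{n+1}, then 0 is an α-quantile of the residual S − ξ·Y; that is, P(S − ξ·Y ≤ 0) ≥ α and P(S − ξ·Y < 0) ≤ α. -/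
/-!
Multiplied by `1 - α`, the loss becomes the check function `y ↦ α * y + max (-y) 0`, which is
convex with subgradient `α - 1{y ≤ 0}`. Moving the position in the cash asset `Y₀ = c` by `r / c`
shifts the residual `Z = S - ξ·Y` by the constant `r`, so `r = 0` minimizes
`r ↦ E[ℓ_α(Z - r)]`. The subgradient inequality then gives
`0 ≤ (1 - α) (E[ℓ_α(Z - r)] - E[ℓ_α(Z)]) ≤ r (P(Z ≤ r) - α)` for every `r`, i.e.
`P(Z ≤ r) ≥ α` for `r > 0` and `P(Z ≤ r) ≤ α` for `r < 0`; letting `r → 0` from either side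
(continuity of measure) yields `P(Z ≤ 0) ≥ α` and `P(Z < 0) ≤ α`.
-/

open MeasureTheory Filter Set Topology

section Quantile

variable {Ω : Type*} [MeasurableSpace Ω] {μ : Measure Ω} {Z : Ω → ℝ}

def IsQuantile (μ : Measure Ω) (Z : Ω → ℝ) (α q : ℝ) : Prop :=
  α ≤ μ.real {ω | Z ω ≤ q} ∧ μ.real {ω | Z ω < q} ≤ α

lemma le_measureReal_setOf_le_of_forall_gt [IsFiniteMeasure μ] (hZ : AEMeasurable Z μ)
    {a c : ℝ} (h : ∀ r > a, c ≤ μ.real {ω | Z ω ≤ r}) : c ≤ μ.real {ω | Z ω ≤ a} := by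
  have hset : {ω | Z ω ≤ a} = ⋂ k : ℕ, {ω | Z ω ≤ a + 1 / (k + 1)} := by
    ext ω
    simp only [mem_ofPred_eq, mem_iInter]
    refine ⟨fun hω k => hω.trans (le_add_of_nonneg_right (by positivity)), fun hω => ?_⟩
    by_contra! hlt
    obtain ⟨k, hk⟩ := exists_nat_one_div_lt (sub_pos.2 hlt)
    linarith [hω k]
  have htend : Tendsto (fun k : ℕ => μ.real {ω | Z ω ≤ a + 1 / (k + 1)}) atTop
      (𝓝 (μ.real {ω | Z ω ≤ a})) := by
    rw [hset]
    refine (ENNReal.tendsto_toReal (measure_ne_top _ _)).comp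
      (tendsto_measure_iInter_atTop (fun k => hZ.nullMeasurable measurableSet_Iic)
        (fun i j hij ω (hω : Z ω ≤ _) => hω.trans ?_) ⟨0, measure_ne_top _ _⟩)
    gcongr
  exact ge_of_tendsto' htend fun k => h _ (lt_add_of_pos_right a (by positivity))

lemma measureReal_setOf_lt_le_of_forall_lt [IsFiniteMeasure μ] {a c : ℝ}
    (h : ∀ r < a, μ.real {ω | Z ω ≤ r} ≤ c) : μ.real {ω | Z ω < a} ≤ c := by
  have hset : {ω | Z ω < a} = ⋃ k : ℕ, {ω | Z ω ≤ a - 1 / (k + 1)} := by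
    ext ω
    simp only [mem_ofPred_eq, mem_iUnion]
    refine ⟨fun hω => ?_, fun ⟨k, hk⟩ => hk.trans_lt (sub_lt_self a (by positivity))⟩
    obtain ⟨k, hk⟩ := exists_nat_one_div_lt (sub_pos.2 hω)
    exact ⟨k, by linarith⟩
  have htend : Tendsto (fun k : ℕ => μ.real {ω | Z ω ≤ a - 1 / (k + 1)}) atTop
      (𝓝 (μ.real {ω | Z ω < a})) := by
    rw [hset]
    refine (ENNReal.tendsto_toReal (measure_ne_top _ _)).comp
      (tendsto_measure_iUnion_atTop fun i j hij ω (hω : Z ω ≤ _) => hω.trans ?_)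
    gcongr
  exact le_of_tendsto' htend fun k => h _ (sub_lt_self a (by positivity))

end Quantile

section KBLoss

variable {α : ℝ}

lemma one_sub_mul_KBLoss (hα : α ≠ 1) (x : ℝ) :
    (1 - α) * KBLoss α x = α * x + max (-x) 0 := by
  unfold KBLoss
  rw [mul_add, ← mul_assoc, mul_div_cancel₀ _ (sub_ne_zero.2 hα.symm)]
  linear_combination α * max_zero_sub_max_neg_zero_eq_self x

lemma one_sub_mul_KBLoss_sub_sub_le (hα : α ≠ 1) (x r : ℝ) :
    (1 - α) * (KBLoss α (x - r) - KBLoss α x) ≤ r * ((Iic r).indicator 1 x - α) := by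
  rw [mul_sub, one_sub_mul_KBLoss hα, one_sub_mul_KBLoss hα]
  simp only [indicator, max_def, mem_Iic, Pi.one_apply]
  split_ifs <;> linarith

variable {Ω : Type*} [MeasurableSpace Ω] {μ : Measure Ω} {Z : Ω → ℝ}

lemma MeasureTheory.Integrable.KBLoss (hZ : Integrable Z μ) :
    Integrable (fun ω => KBLoss α (Z ω)) μ :=
  (hZ.pos_part.const_mul _).add hZ.neg.pos_part

lemma one_sub_mul_integral_KBLoss_sub_sub_le [IsProbabilityMeasure μ] (hZ : Integrable Z μ)
    (hα : α ≠ 1) (r : ℝ) :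
    (1 - α) * (∫ ω, KBLoss α (Z ω - r) ∂μ - ∫ ω, KBLoss α (Z ω) ∂μ)
      ≤ r * (μ.real {ω | Z ω ≤ r} - α) := by
  have hs : NullMeasurableSet {ω | Z ω ≤ r} μ := hZ.aemeasurable.nullMeasurable measurableSet_Iic
  have hind : Integrable ({ω | Z ω ≤ r}.indicator (1 : Ω → ℝ)) μ :=
    (integrable_const 1).indicator₀ hs
  have hZr : Integrable (fun ω => Z ω - r) μ := hZ.sub (integrable_const r)
  rw [← integral_sub hZr.KBLoss hZ.KBLoss, ← integral_const_mul]
  calc ∫ ω, (1 - α) * (KBLoss α (Z ω - r) - KBLoss α (Z ω)) ∂μ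
      ≤ ∫ ω, r * ({ω | Z ω ≤ r}.indicator 1 ω - α) ∂μ :=
        integral_mono ((hZr.KBLoss.sub hZ.KBLoss).const_mul _)
          ((hind.sub (integrable_const α)).const_mul r)
          fun ω => one_sub_mul_KBLoss_sub_sub_le hα (Z ω) r
    _ = r * (μ.real {ω | Z ω ≤ r} - α) := by
        rw [integral_const_mul, integral_sub hind (integrable_const α), integral_indicator₀ hs]
        simp

theorem isQuantile_zero_of_forall_integral_KBLoss_le [IsProbabilityMeasure μ]
    (hZ : Integrable Z μ) (hα : α < 1)
    (hmin : ∀ r, ∫ ω, KBLoss α (Z ω) ∂μ ≤ ∫ ω, KBLoss α (Z ω - r) ∂μ) :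
    IsQuantile μ Z α 0 := by
  have hsign (r : ℝ) : 0 ≤ r * (μ.real {ω | Z ω ≤ r} - α) :=
    (mul_nonneg (sub_nonneg.2 hα.le) (sub_nonneg.2 (hmin r))).trans
      (one_sub_mul_integral_KBLoss_sub_sub_le hZ hα.ne r)
  refine ⟨le_measureReal_setOf_le_of_forall_gt hZ.aemeasurable fun r hr => ?_,
    measureReal_setOf_lt_le_of_forall_lt fun r hr => ?_⟩
  · exact sub_nonneg.1 ((mul_nonneg_iff_of_pos_left hr).1 (hsign r))
  · nlinarith [hsign r]

end KBLoss

/-- If the integrable asset payoffs have `Y₀` a.s. equal to a strictly positive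
constant and `ξ` minimizes `β ↦ E[ℓ_α(S − β·Y)]`, then `0` is an `α`-quantile of the residual
`S − ξ·Y`: `P(S − ξ·Y ≤ 0) ≥ α` and `P(S − ξ·Y < 0) ≤ α`. -/
theorem quantile_hedge_residual_quantile_zero
    {Ω : Type*} [MeasureSpace Ω] [IsProbabilityMeasure (volume : Measure Ω)]
    (n : ℕ) (Y : Fin (n + 1) → Ω → ℝ)
    (hY : ∀ i, Integrable (Y i) volume)
    (c : ℝ) (hc : 0 < c) (hY0 : ∀ᵐ ω, Y 0 ω = c)
    (S : Ω → ℝ) (hS : Integrable S volume)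
    (α : ℝ) (hα : α ∈ Set.Ioo (0 : ℝ) 1)
    (ξ : Fin (n + 1) → ℝ)
    (hξ : ∀ β : Fin (n + 1) → ℝ,
      (∫ ω, KBLoss α (S ω - ∑ i, ξ i * Y i ω))
        ≤ ∫ ω, KBLoss α (S ω - ∑ i, β i * Y i ω)) :
    α ≤ (volume {ω | S ω - ∑ i, ξ i * Y i ω ≤ 0}).toReal ∧
    (volume {ω | S ω - ∑ i, ξ i * Y i ω < 0}).toReal ≤ α := by
  have hZ : Integrable (fun ω => S ω - ∑ i, ξ i * Y i ω) volume :=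
    hS.sub (integrable_finsetSum _ fun i _ => (hY i).const_mul (ξ i))
  refine isQuantile_zero_of_forall_integral_KBLoss_le hZ hα.2 fun r => ?_
  refine (hξ (ξ + Pi.single 0 (r / c))).trans_eq (integral_congr_ae ?_)
  filter_upwards [hY0] with ω hω
  simp [add_mul, Finset.sum_add_distrib, Pi.single_apply, hω, hc.ne', sub_add_eq_sub_sub]
end

section
/- Suppose the asset payoffs Y = (Y₀, Y₁, …, Yₙ) are square-integrable and non-redundant, let S be a square-integrable liability, ν ∈ ℝ^{n+1}, and set S^h = ν·Y. Then the (unique) quadratic hedging strategies satisfy θ_{S+S^h} = θ_S + ν, and the residual of S + S^h equals the residual of S: (S + S^h) − θ_{S+S^h}·Y = S − θ_S·Y a.s. Consequently, for α ∈ (0,1), the set of minimizers over β ∈ ℝ^{n+1} of E[ℓ_α((S+S^h) − θ_{S+S^h}·Y − β·Y)] coincides with the set of minimizers of E[ℓ_α(S − θ_S·Y − β·Y)], and for any common choice η of such a minimizer and any price vector y ∈ ℝ^{n+1} and i ∈ (0,1), the mean-quantile valuation satisfies ρ(S + S^h) = ρ(S) + ν·y. -/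
open MeasureTheory

/-!
Adding the hedgeable payoff `ν·Y` to `S` shifts every quadratic hedge by `ν`, so `θ_{S+Sʰ} - ν` is a
quadratic hedge of `S`. Quadratic hedges are unique: two minimizers have a midpoint whose residual
is, by the parallelogram law, strictly better unless both residuals agree a.s., and non-redundancy
turns a.s. equal residuals into equal strategies. Hence `θ_{S+Sʰ} = θ_S + ν`, the residuals of
`S + Sʰ` and `S` are the same function, and everything built from the residual (the quantile
hedges) is unchanged, while the cost of the quadratic hedge grows by `ν·y`.
-/

theorem add_sum_mul_sub_sum_add_mul {ι : Type*} [Fintype ι] (s : ℝ) (γ ν x : ι → ℝ) :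
    s + ∑ i, ν i * x i - ∑ i, (γ + ν) i * x i = s - ∑ i, γ i * x i := by
  simp only [Pi.add_apply, add_mul, Finset.sum_add_distrib]
  ring

section QuadraticHedge

variable {Ω ι : Type*} [MeasurableSpace Ω] {μ : Measure Ω}

theorem ae_eq_of_integral_sq_le_integral_sq_midpoint {f g : Ω → ℝ}
    (hf : MemLp f 2 μ) (hg : MemLp g 2 μ)
    (hfm : ∫ ω, f ω ^ 2 ∂μ ≤ ∫ ω, ((f ω + g ω) / 2) ^ 2 ∂μ)
    (hgm : ∫ ω, g ω ^ 2 ∂μ ≤ ∫ ω, ((f ω + g ω) / 2) ^ 2 ∂μ) :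
    f =ᵐ[μ] g := by
  have hmid : Integrable (fun ω => ((f ω + g ω) / 2) ^ 2) μ :=
    ((hf.add hg).integrable_sq.div_const 4).congr
      (ae_of_all _ fun ω => by simp only [Pi.add_apply]; ring)
  have parallelogram : ∫ ω, (f ω - g ω) ^ 2 ∂μ
      = 2 * ∫ ω, f ω ^ 2 ∂μ + 2 * ∫ ω, g ω ^ 2 ∂μ - 4 * ∫ ω, ((f ω + g ω) / 2) ^ 2 ∂μ :=
    calc ∫ ω, (f ω - g ω) ^ 2 ∂μ
        = ∫ ω, 2 * f ω ^ 2 + 2 * g ω ^ 2 - 4 * ((f ω + g ω) / 2) ^ 2 ∂μ := by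
          congr 1 with ω
          ring
      _ = _ := by
          rw [integral_sub ((hf.integrable_sq.const_mul 2).fun_add (hg.integrable_sq.const_mul 2))
              (hmid.const_mul 4),
            integral_add (hf.integrable_sq.const_mul 2) (hg.integrable_sq.const_mul 2),
            integral_const_mul, integral_const_mul, integral_const_mul]
  have hnn : 0 ≤ fun ω => (f ω - g ω) ^ 2 := fun ω => sq_nonneg _
  have hzero : (fun ω => (f ω - g ω) ^ 2) =ᵐ[μ] 0 :=
    (integral_eq_zero_iff_of_nonneg hnn (hf.sub hg).integrable_sq).mp
      (le_antisymm (by linarith) (integral_nonneg hnn))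
  filter_upwards [hzero] with ω hω
  exact sub_eq_zero.mp (pow_eq_zero_iff two_ne_zero |>.mp hω)

variable [Fintype ι] (μ) (Y : ι → Ω → ℝ)

def IsQuadraticHedge (S : Ω → ℝ) (θ : ι → ℝ) : Prop :=
  ∀ β : ι → ℝ, ∫ ω, (S ω - ∑ i, θ i * Y i ω) ^ 2 ∂μ ≤ ∫ ω, (S ω - ∑ i, β i * Y i ω) ^ 2 ∂μ

variable {μ Y}

theorem IsQuadraticHedge.sub_of_add {S : Ω → ℝ} {ν θ : ι → ℝ}
    (h : IsQuadraticHedge μ Y (fun ω => S ω + ∑ i, ν i * Y i ω) θ) :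
    IsQuadraticHedge μ Y S (θ - ν) := by
  intro β
  have hβ := h (β + ν)
  rw [← sub_add_cancel θ ν] at hβ
  simpa only [add_sum_mul_sub_sum_add_mul] using hβ

theorem IsQuadraticHedge.eq {S : Ω → ℝ} {θ₁ θ₂ : ι → ℝ}
    (hY : ∀ i, MemLp (Y i) 2 μ) (hS : MemLp S 2 μ)
    (hNR : ∀ β : ι → ℝ, (∀ᵐ ω ∂μ, ∑ i, β i * Y i ω = 0) → β = 0)
    (h₁ : IsQuadraticHedge μ Y S θ₁) (h₂ : IsQuadraticHedge μ Y S θ₂) :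
    θ₁ = θ₂ := by
  have hres : ∀ θ : ι → ℝ, MemLp (fun ω => S ω - ∑ i, θ i * Y i ω) 2 μ := fun θ =>
    hS.sub (memLp_finsetSum _ fun i _ => (hY i).const_mul (θ i))
  have midpoint : ∀ ω, S ω - ∑ i, (θ₁ i + θ₂ i) / 2 * Y i ω
      = ((S ω - ∑ i, θ₁ i * Y i ω) + (S ω - ∑ i, θ₂ i * Y i ω)) / 2 := by
    intro ω
    simp only [add_div, add_mul, Finset.sum_add_distrib, div_mul_eq_mul_div, ← Finset.sum_div]
    ring
  have hae := ae_eq_of_integral_sq_le_integral_sq_midpoint (hres θ₁) (hres θ₂)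
    (by simpa only [midpoint] using h₁ fun i => (θ₁ i + θ₂ i) / 2)
    (by simpa only [midpoint] using h₂ fun i => (θ₁ i + θ₂ i) / 2)
  refine (sub_eq_zero.mp (hNR (θ₂ - θ₁) ?_)).symm
  filter_upwards [hae] with ω hω
  simp only [Pi.sub_apply, sub_mul, Finset.sum_sub_distrib]
  linarith

end QuadraticHedge

theorem mean_quantile_valuation_market_consistent_general
    {Ω : Type*} [MeasureSpace Ω]
    (n : ℕ) (Y : Fin (n + 1) → Ω → ℝ) (y : Fin (n + 1) → ℝ)
    (hY : ∀ i, MemLp (Y i) 2 volume)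
    (hNR : ∀ β : Fin (n + 1) → ℝ, (∀ᵐ ω, ∑ i, β i * Y i ω = 0) → β = 0)
    (S : Ω → ℝ) (hS : MemLp S 2 volume)
    (ν : Fin (n + 1) → ℝ)
    (α : ℝ)
    (coc : ℝ)
    (θS θSh : Fin (n + 1) → ℝ)
    (hθS : ∀ β : Fin (n + 1) → ℝ,
      (∫ ω, (S ω - ∑ i, θS i * Y i ω) ^ 2) ≤ ∫ ω, (S ω - ∑ i, β i * Y i ω) ^ 2)
    (hθSh : ∀ β : Fin (n + 1) → ℝ,
      (∫ ω, (S ω + ∑ i, ν i * Y i ω - ∑ i, θSh i * Y i ω) ^ 2)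
        ≤ ∫ ω, (S ω + ∑ i, ν i * Y i ω - ∑ i, β i * Y i ω) ^ 2) :
    θSh = θS + ν ∧
    (∀ᵐ ω, S ω + ∑ i, ν i * Y i ω - ∑ i, θSh i * Y i ω = S ω - ∑ i, θS i * Y i ω) ∧
    {η : Fin (n + 1) → ℝ |
        ∀ β : Fin (n + 1) → ℝ,
          (∫ ω, KBLoss α (S ω + ∑ i, ν i * Y i ω - ∑ i, θSh i * Y i ω - ∑ i, η i * Y i ω))
            ≤ ∫ ω, KBLoss α (S ω + ∑ i, ν i * Y i ω - ∑ i, θSh i * Y i ω - ∑ i, β i * Y i ω)}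
      = {η : Fin (n + 1) → ℝ |
          ∀ β : Fin (n + 1) → ℝ,
            (∫ ω, KBLoss α (S ω - ∑ i, θS i * Y i ω - ∑ i, η i * Y i ω))
              ≤ ∫ ω, KBLoss α (S ω - ∑ i, θS i * Y i ω - ∑ i, β i * Y i ω)} ∧
    (∀ η : Fin (n + 1) → ℝ,
      (∀ β : Fin (n + 1) → ℝ,
        (∫ ω, KBLoss α (S ω - ∑ i, θS i * Y i ω - ∑ i, η i * Y i ω))
          ≤ ∫ ω, KBLoss α (S ω - ∑ i, θS i * Y i ω - ∑ i, β i * Y i ω)) →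
      (∑ i, θSh i * y i) + coc * ∑ i, η i * y i
        = ((∑ i, θS i * y i) + coc * ∑ i, η i * y i) + ∑ i, ν i * y i) := by
  have hθ : θSh - ν = θS :=
    (IsQuadraticHedge.sub_of_add (S := S) hθSh).eq hY hS hNR hθS
  obtain rfl : θSh = θS + ν := eq_add_of_sub_eq hθ
  refine ⟨rfl, ae_of_all _ fun ω => add_sum_mul_sub_sum_add_mul _ _ _ _,
    by simp only [add_sum_mul_sub_sum_add_mul], fun η _ => ?_⟩
  simp only [Pi.add_apply, add_mul, Finset.sum_add_distrib]
  ring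

/-- Market-consistency of the mean-quantile valuation. With non-redundant
square-integrable assets, for a hedgeable payoff `S^h = ν·Y`: the quadratic hedging strategies
satisfy `θ_{S+S^h} = θ_S + ν`, the residuals of `S + S^h` and `S` coincide a.s., the sets of
residual quantile-hedging minimizers coincide, and for any common minimizer `η` the
mean-quantile valuation satisfies `ρ(S + S^h) = ρ(S) + ν·y`. -/
theorem mean_quantile_valuation_market_consistent
    {Ω : Type*} [MeasureSpace Ω] [IsProbabilityMeasure (volume : Measure Ω)]
    (n : ℕ) (Y : Fin (n + 1) → Ω → ℝ) (y : Fin (n + 1) → ℝ)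
    (hY : ∀ i, MemLp (Y i) 2 volume)
    (hNR : ∀ β : Fin (n + 1) → ℝ, (∀ᵐ ω, ∑ i, β i * Y i ω = 0) → β = 0)
    (S : Ω → ℝ) (hS : MemLp S 2 volume)
    (ν : Fin (n + 1) → ℝ)
    (α : ℝ) (hα : α ∈ Set.Ioo (0 : ℝ) 1)
    (coc : ℝ) (hcoc : coc ∈ Set.Ioo (0 : ℝ) 1)
    (θS θSh : Fin (n + 1) → ℝ)
    (hθS : ∀ β : Fin (n + 1) → ℝ,
      (∫ ω, (S ω - ∑ i, θS i * Y i ω) ^ 2) ≤ ∫ ω, (S ω - ∑ i, β i * Y i ω) ^ 2)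
    (hθSh : ∀ β : Fin (n + 1) → ℝ,
      (∫ ω, (S ω + ∑ i, ν i * Y i ω - ∑ i, θSh i * Y i ω) ^ 2)
        ≤ ∫ ω, (S ω + ∑ i, ν i * Y i ω - ∑ i, β i * Y i ω) ^ 2) :
    θSh = θS + ν ∧
    (∀ᵐ ω, S ω + ∑ i, ν i * Y i ω - ∑ i, θSh i * Y i ω = S ω - ∑ i, θS i * Y i ω) ∧
    {η : Fin (n + 1) → ℝ |
        ∀ β : Fin (n + 1) → ℝ,
          (∫ ω, KBLoss α (S ω + ∑ i, ν i * Y i ω - ∑ i, θSh i * Y i ω - ∑ i, η i * Y i ω))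
            ≤ ∫ ω, KBLoss α (S ω + ∑ i, ν i * Y i ω - ∑ i, θSh i * Y i ω - ∑ i, β i * Y i ω)}
      = {η : Fin (n + 1) → ℝ |
          ∀ β : Fin (n + 1) → ℝ,
            (∫ ω, KBLoss α (S ω - ∑ i, θS i * Y i ω - ∑ i, η i * Y i ω))
              ≤ ∫ ω, KBLoss α (S ω - ∑ i, θS i * Y i ω - ∑ i, β i * Y i ω)} ∧
    (∀ η : Fin (n + 1) → ℝ,
      (∀ β : Fin (n + 1) → ℝ,
        (∫ ω, KBLoss α (S ω - ∑ i, θS i * Y i ω - ∑ i, η i * Y i ω))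
          ≤ ∫ ω, KBLoss α (S ω - ∑ i, θS i * Y i ω - ∑ i, β i * Y i ω)) →
      (∑ i, θSh i * y i) + coc * ∑ i, η i * y i
        = ((∑ i, θS i * y i) + coc * ∑ i, η i * y i) + ∑ i, ν i * y i) :=
  mean_quantile_valuation_market_consistent_general n Y y hY hNR S hS ν α coc θS θSh hθS hθSh
end

section
/- Suppose the asset payoffs Y = (Y₀, Y₁, …, Yₙ) are square-integrable and non-redundant, with time-0 prices y ∈ ℝ^{n+1}, let α ∈ (0,1), i ∈ (0,1), λ ≥ 0, and let S be a square-integrable liability. If η is a minimizer over β ∈ ℝ^{n+1} of E[ℓ_α(S − θ_S·Y − β·Y)], then λ·η is a minimizer over β of E[ℓ_α(λS − θ_{λS}·Y − β·Y)], and the corresponding mean-quantile valuations satisfy ρ(λS) = λ·ρ(S). -/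
open MeasureTheory

/-!
The squared loss and the Koenker–Bassett loss are positively homogeneous (of degrees 2 and 1),
so multiplying the target by `l ≥ 0` multiplies every minimiser by `l`. The quadratic hedge
`θ_{lS}` is an arbitrary minimiser, so one also needs it to equal `l • θ_S`: non-redundancy makes
the quadratic minimiser unique, since at the midpoint of two minimisers `β₁, β₂` the objective
falls short of their common value by `E[((β₂ - β₁)·Y)²] / 4`.
-/

lemma KBLoss_nonneg {α : ℝ} (hα : α ∈ Set.Ioo (0 : ℝ) 1) (x : ℝ) : 0 ≤ KBLoss α x :=
  add_nonneg (mul_nonneg (div_nonneg hα.1.le (sub_nonneg.2 hα.2.le)) (le_max_right _ _))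
    (le_max_right _ _)

lemma KBLoss_zero (α : ℝ) : KBLoss α 0 = 0 := by
  simp [KBLoss]

lemma KBLoss_mul_of_nonneg (α : ℝ) {l : ℝ} (hl : 0 ≤ l) (x : ℝ) :
    KBLoss α (l * x) = l * KBLoss α x := by
  simp only [KBLoss, mul_add, mul_left_comm l, mul_max_of_nonneg _ _ hl, mul_zero, mul_neg]

section ResidualMinimizer

variable {Ω ι : Type*} [MeasurableSpace Ω] {μ : Measure Ω} [Fintype ι]

lemma sum_smul_mul (c : ℝ) (β x : ι → ℝ) : ∑ i, (c • β) i * x i = c * ∑ i, β i * x i :=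
  smul_dotProduct c β x

def IsResidualMinimizer (μ : Measure Ω) (φ : ℝ → ℝ) (Y : ι → Ω → ℝ) (T : Ω → ℝ) (θ : ι → ℝ) :
    Prop :=
  ∀ β : ι → ℝ, ∫ ω, φ (T ω - ∑ i, θ i * Y i ω) ∂μ ≤ ∫ ω, φ (T ω - ∑ i, β i * Y i ω) ∂μ

lemma IsResidualMinimizer.smul {φ : ℝ → ℝ} {Y : ι → Ω → ℝ} {T : Ω → ℝ} {θ : ι → ℝ}
    (h : IsResidualMinimizer μ φ Y T θ) (hφ_nonneg : ∀ x, 0 ≤ φ x) (hφ0 : φ 0 = 0) {l c : ℝ}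
    (hc : 0 ≤ c) (hφ : ∀ x, φ (l * x) = c * φ x) :
    IsResidualMinimizer μ φ Y (fun ω => l * T ω) (l • θ) := by
  intro β
  have hres : ∀ (γ : ι → ℝ) ω, l * T ω - ∑ i, (l • γ) i * Y i ω = l * (T ω - ∑ i, γ i * Y i ω) :=
    fun γ ω => by rw [sum_smul_mul]; ring
  simp_rw [hres, hφ]
  rw [integral_const_mul]
  rcases eq_or_ne l 0 with rfl | hl
  · -- `c * φ x = φ (0 * x) = φ 0 = 0`
    have hLHS : c * ∫ ω, φ (T ω - ∑ i, θ i * Y i ω) ∂μ = 0 := by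
      simp [← integral_const_mul, ← hφ, hφ0]
    rw [hLHS]
    exact integral_nonneg fun ω => hφ_nonneg _
  · calc c * ∫ ω, φ (T ω - ∑ i, θ i * Y i ω) ∂μ
        ≤ c * ∫ ω, φ (T ω - ∑ i, (l⁻¹ • β) i * Y i ω) ∂μ := mul_le_mul_of_nonneg_left (h _) hc
      _ = ∫ ω, φ (l * T ω - ∑ i, β i * Y i ω) ∂μ := by
        rw [← integral_const_mul]
        congr 1 with ω
        rw [← hφ, ← hres, smul_inv_smul₀ hl]

lemma memLp_sum_mul {Y : ι → Ω → ℝ} (hY : ∀ i, MemLp (Y i) 2 μ) (β : ι → ℝ) :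
    MemLp (fun ω => ∑ i, β i * Y i ω) 2 μ :=
  memLp_finsetSum _ fun i _ => (hY i).const_mul (β i)

lemma integral_sq_residual_midpoint {Y : ι → Ω → ℝ} {T : Ω → ℝ} (hY : ∀ i, MemLp (Y i) 2 μ)
    (hT : MemLp T 2 μ) (β₁ β₂ : ι → ℝ) :
    ∫ ω, (T ω - ∑ i, ((2⁻¹ : ℝ) • (β₁ + β₂)) i * Y i ω) ^ 2 ∂μ =
      (∫ ω, (T ω - ∑ i, β₁ i * Y i ω) ^ 2 ∂μ + ∫ ω, (T ω - ∑ i, β₂ i * Y i ω) ^ 2 ∂μ) / 2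
        - (∫ ω, (∑ i, (β₂ - β₁) i * Y i ω) ^ 2 ∂μ) / 4 := by
  have hres : ∀ β : ι → ℝ, Integrable (fun ω => (T ω - ∑ i, β i * Y i ω) ^ 2) μ :=
    fun β => (hT.sub (memLp_sum_mul hY β)).integrable_sq
  have hpoint : ∀ ω, (T ω - ∑ i, ((2⁻¹ : ℝ) • (β₁ + β₂)) i * Y i ω) ^ 2 =
      ((T ω - ∑ i, β₁ i * Y i ω) ^ 2 + (T ω - ∑ i, β₂ i * Y i ω) ^ 2) / 2
        - (∑ i, (β₂ - β₁) i * Y i ω) ^ 2 / 4 := fun ω => by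
    change (T ω - ((2⁻¹ : ℝ) • (β₁ + β₂)) ⬝ᵥ (Y · ω)) ^ 2 =
      ((T ω - β₁ ⬝ᵥ (Y · ω)) ^ 2 + (T ω - β₂ ⬝ᵥ (Y · ω)) ^ 2) / 2 - ((β₂ - β₁) ⬝ᵥ (Y · ω)) ^ 2 / 4
    rw [smul_dotProduct, add_dotProduct, sub_dotProduct, smul_eq_mul]
    ring
  have hmean : Integrable
      (fun ω => ((T ω - ∑ i, β₁ i * Y i ω) ^ 2 + (T ω - ∑ i, β₂ i * Y i ω) ^ 2) / 2) μ :=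
    ((hres β₁).add (hres β₂)).div_const 2
  simp_rw [hpoint]
  rw [integral_sub hmean ((memLp_sum_mul hY (β₂ - β₁)).integrable_sq.div_const 4),
    integral_div, integral_div, integral_add (hres β₁) (hres β₂)]

lemma IsResidualMinimizer.eq_of_sq {Y : ι → Ω → ℝ} {T : Ω → ℝ} {β₁ β₂ : ι → ℝ}
    (hY : ∀ i, MemLp (Y i) 2 μ)
    (hNR : ∀ β : ι → ℝ, (∀ᵐ ω ∂μ, ∑ i, β i * Y i ω = 0) → β = 0) (hT : MemLp T 2 μ)
    (h₁ : IsResidualMinimizer μ (· ^ 2) Y T β₁) (h₂ : IsResidualMinimizer μ (· ^ 2) Y T β₂) :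
    β₁ = β₂ := by
  have hmid : ∫ ω, (T ω - ∑ i, β₁ i * Y i ω) ^ 2 ∂μ
      ≤ ∫ ω, (T ω - ∑ i, ((2⁻¹ : ℝ) • (β₁ + β₂)) i * Y i ω) ^ 2 ∂μ := h₁ _
  have hsame : ∫ ω, (T ω - ∑ i, β₁ i * Y i ω) ^ 2 ∂μ = ∫ ω, (T ω - ∑ i, β₂ i * Y i ω) ^ 2 ∂μ :=
    le_antisymm (h₁ β₂) (h₂ β₁)
  rw [integral_sq_residual_midpoint hY hT, ← hsame] at hmid
  have hzero : ∫ ω, (∑ i, (β₂ - β₁) i * Y i ω) ^ 2 ∂μ = 0 :=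
    le_antisymm (by linarith) (integral_nonneg fun ω => sq_nonneg _)
  rw [integral_eq_zero_iff_of_nonneg (fun ω => sq_nonneg _)
    (memLp_sum_mul hY (β₂ - β₁)).integrable_sq] at hzero
  exact (sub_eq_zero.1 (hNR _ (hzero.mono fun ω hω => pow_eq_zero_iff two_ne_zero |>.1 hω))).symm

end ResidualMinimizer

theorem mean_quantile_valuation_posHom_general
    {Ω : Type*} [MeasureSpace Ω]
    (n : ℕ) (Y : Fin (n + 1) → Ω → ℝ) (y : Fin (n + 1) → ℝ)
    (hY : ∀ i, MemLp (Y i) 2 volume)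
    (hNR : ∀ β : Fin (n + 1) → ℝ, (∀ᵐ ω, ∑ i, β i * Y i ω = 0) → β = 0)
    (α : ℝ) (hα : α ∈ Set.Ioo (0 : ℝ) 1)
    (coc : ℝ)
    (l : ℝ) (hl : 0 ≤ l)
    (S : Ω → ℝ) (hS : MemLp S 2 volume)
    (θS θlS : Fin (n + 1) → ℝ)
    (hθS : ∀ β : Fin (n + 1) → ℝ,
      (∫ ω, (S ω - ∑ i, θS i * Y i ω) ^ 2) ≤ ∫ ω, (S ω - ∑ i, β i * Y i ω) ^ 2)
    (hθlS : ∀ β : Fin (n + 1) → ℝ,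
      (∫ ω, (l * S ω - ∑ i, θlS i * Y i ω) ^ 2) ≤ ∫ ω, (l * S ω - ∑ i, β i * Y i ω) ^ 2)
    (η : Fin (n + 1) → ℝ)
    (hη : ∀ β : Fin (n + 1) → ℝ,
      (∫ ω, KBLoss α (S ω - ∑ i, θS i * Y i ω - ∑ i, η i * Y i ω))
        ≤ ∫ ω, KBLoss α (S ω - ∑ i, θS i * Y i ω - ∑ i, β i * Y i ω)) :
    (∀ β : Fin (n + 1) → ℝ,
      (∫ ω, KBLoss α (l * S ω - ∑ i, θlS i * Y i ω - ∑ i, (l • η) i * Y i ω))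
        ≤ ∫ ω, KBLoss α (l * S ω - ∑ i, θlS i * Y i ω - ∑ i, β i * Y i ω)) ∧
    (∑ i, θlS i * y i) + coc * ∑ i, (l • η) i * y i
      = l * ((∑ i, θS i * y i) + coc * ∑ i, η i * y i) := by
  have hθS' : IsResidualMinimizer volume (· ^ 2) Y S θS := hθS
  obtain rfl : θlS = l • θS :=
    IsResidualMinimizer.eq_of_sq hY hNR (hS.const_mul l) hθlS
      (hθS'.smul sq_nonneg (zero_pow two_ne_zero) (sq_nonneg l)
        fun x => mul_pow l x 2)
  have hη' : IsResidualMinimizer volume (KBLoss α) Y (fun ω => S ω - ∑ i, θS i * Y i ω) η := hη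
  have hresidual : (fun ω => l * S ω - ∑ i, (l • θS) i * Y i ω)
      = fun ω => l * (S ω - ∑ i, θS i * Y i ω) := by
    funext ω
    rw [sum_smul_mul]
    ring
  refine ⟨?_, by simp only [sum_smul_mul]; ring⟩
  have hlη := hη'.smul (KBLoss_nonneg hα) (KBLoss_zero α) hl (KBLoss_mul_of_nonneg α hl)
  rwa [← hresidual] at hlη

/-- Positive homogeneity of the mean-quantile valuation. With non-redundant
square-integrable assets and `λ ≥ 0`: if `η` minimizes the residual Koenker–Bassett error for
`S`, then `λ·η` minimizes the residual Koenker–Bassett error for `λS`, and the mean-quantile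
valuations satisfy `ρ(λS) = λ·ρ(S)`. -/
theorem mean_quantile_valuation_posHom
    {Ω : Type*} [MeasureSpace Ω] [IsProbabilityMeasure (volume : Measure Ω)]
    (n : ℕ) (Y : Fin (n + 1) → Ω → ℝ) (y : Fin (n + 1) → ℝ)
    (hY : ∀ i, MemLp (Y i) 2 volume)
    (hNR : ∀ β : Fin (n + 1) → ℝ, (∀ᵐ ω, ∑ i, β i * Y i ω = 0) → β = 0)
    (α : ℝ) (hα : α ∈ Set.Ioo (0 : ℝ) 1)
    (coc : ℝ) (hcoc : coc ∈ Set.Ioo (0 : ℝ) 1)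
    (l : ℝ) (hl : 0 ≤ l)
    (S : Ω → ℝ) (hS : MemLp S 2 volume)
    (θS θlS : Fin (n + 1) → ℝ)
    (hθS : ∀ β : Fin (n + 1) → ℝ,
      (∫ ω, (S ω - ∑ i, θS i * Y i ω) ^ 2) ≤ ∫ ω, (S ω - ∑ i, β i * Y i ω) ^ 2)
    (hθlS : ∀ β : Fin (n + 1) → ℝ,
      (∫ ω, (l * S ω - ∑ i, θlS i * Y i ω) ^ 2) ≤ ∫ ω, (l * S ω - ∑ i, β i * Y i ω) ^ 2)
    (η : Fin (n + 1) → ℝ)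
    (hη : ∀ β : Fin (n + 1) → ℝ,
      (∫ ω, KBLoss α (S ω - ∑ i, θS i * Y i ω - ∑ i, η i * Y i ω))
        ≤ ∫ ω, KBLoss α (S ω - ∑ i, θS i * Y i ω - ∑ i, β i * Y i ω)) :
    (∀ β : Fin (n + 1) → ℝ,
      (∫ ω, KBLoss α (l * S ω - ∑ i, θlS i * Y i ω - ∑ i, (l • η) i * Y i ω))
        ≤ ∫ ω, KBLoss α (l * S ω - ∑ i, θlS i * Y i ω - ∑ i, β i * Y i ω)) ∧
    (∑ i, θlS i * y i) + coc * ∑ i, (l • η) i * y i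
      = l * ((∑ i, θS i * y i) + coc * ∑ i, η i * y i) :=
  mean_quantile_valuation_posHom_general n Y y hY hNR α hα coc l hl S hS θS θlS hθS hθlS η hη
end
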